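/- Let f : ℝⁿ → ℝ be differentiable and coercive with L-Lipschitz gradient, let H : ℝⁿ → ℝ^{n×n} be a continuous map into the symmetric positive definite matrices, and fix α, σ ∈ (0,1). Let ψ(x) = x + σ^{s_x} v_x be the Armijo-safeguarded update, where v_x = −H(x)⁻¹∇f(x) and s_x is the smallest nonnegative integer s with f(x + σˢ v_x) ≤ f(x) + α σˢ ⟨∇f(x), v_x⟩. Let φ : ℝⁿ → ℝⁿ be any map satisfying f(φ(x)) ≤ f(ψ(ψ(x))) for all x (the modified quasi-Newton acceleration with fallback). Then every limit point of the iterate sequence x_{k+1} = φ(x_k) is a stationary point of f. -/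

import Mathlib

/-!
The Armijo-safeguarded quasi-Newton step `ψ` never increases `f`, so neither does `φ`: the
values `f (x k)` decrease, and they stay above `f p` at a cluster point `p`.
If `∇f p ≠ 0`, then by continuity of `H⁻¹` and `∇f` the direction `v` stays a uniform descent
direction near `p`, and the descent lemma for the `L`-Lipschitz gradient shows that a fixed
power `σ ^ m` passes the Armijo test there. Hence each visit of the iterates near `p` lowers
`f` by a fixed `δ > 0`; a visit with `f (x k) < f p + δ` would push the values below `f p`.
-/

open scoped RealInnerProductSpace
open Matrix Filter Topology

section Armijo

variable {E : Type*} [NormedAddCommGroup E] [InnerProductSpace ℝ E] {f : E → ℝ} {f' : E → E}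

theorem le_of_isLeast_armijo {z v : E} {α σ : ℝ} (hα : 0 ≤ α) (hσ : σ ∈ Set.Icc (0 : ℝ) 1)
    {s m : ℕ} (hs : IsLeast {m : ℕ | f (z + σ ^ m • v) ≤ f z + α * σ ^ m * ⟪f' z, v⟫} s)
    (hm : m ∈ {m : ℕ | f (z + σ ^ m • v) ≤ f z + α * σ ^ m * ⟪f' z, v⟫})
    (hdesc : ⟪f' z, v⟫ ≤ 0) :
    f (z + σ ^ s • v) ≤ f z + α * σ ^ m * ⟪f' z, v⟫ := by
  have hpow : σ ^ m ≤ σ ^ s := pow_le_pow_of_le_one hσ.1 hσ.2 (hs.2 hm)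
  have harmijo : f (z + σ ^ s • v) ≤ f z + α * σ ^ s * ⟪f' z, v⟫ := hs.1
  nlinarith [mul_le_mul_of_nonneg_left hpow hα]

variable [CompleteSpace E] {L : NNReal}

theorem HasGradientAt.hasDerivAt_comp_add_smul {g z w : E} {t : ℝ}
    (h : HasGradientAt f g (z + t • w)) :
    HasDerivAt (fun t : ℝ => f (z + t • w)) ⟪g, w⟫ t := by
  have hline : HasDerivAt (fun t : ℝ => z + t • w) w t := by
    simpa using ((hasDerivAt_id t).smul_const w).const_add z
  simpa [Function.comp_def, InnerProductSpace.toDual_apply_apply] using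
    (hasGradientAt_iff_hasFDerivAt.1 h).comp_hasDerivAt t hline

theorem le_add_inner_add_sq_of_lipschitzWith_gradient (hf : ∀ z, HasGradientAt f (f' z) z)
    (hlip : LipschitzWith L f') (z w : E) :
    f (z + w) ≤ f z + ⟪f' z, w⟫ + L / 2 * ‖w‖ ^ 2 := by
  set r : ℝ → ℝ := fun t => f (z + t • w) - t * ⟪f' z, w⟫ - L / 2 * ‖w‖ ^ 2 * t ^ 2
  have hr : ∀ t, HasDerivAt r (⟪f' (z + t • w) - f' z, w⟫ - L * ‖w‖ ^ 2 * t) t := fun t =>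
    ((((hf (z + t • w)).hasDerivAt_comp_add_smul).sub (hasDerivAt_mul_const ⟪f' z, w⟫)).sub
      ((hasDerivAt_pow 2 t).const_mul (L / 2 * ‖w‖ ^ 2))).congr_deriv
      (by rw [inner_sub_left]; ring)
  have hr_nonpos : ∀ t ∈ interior (Set.Ici (0 : ℝ)),
      ⟪f' (z + t • w) - f' z, w⟫ - L * ‖w‖ ^ 2 * t ≤ 0 := by
    intro t ht
    rw [interior_Ici, Set.mem_Ioi] at ht
    have hgrad : ‖f' (z + t • w) - f' z‖ ≤ L * (t * ‖w‖) := by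
      simpa [norm_smul, abs_of_pos ht] using hlip.norm_sub_le (z + t • w) z
    refine sub_nonpos.2 ?_
    calc ⟪f' (z + t • w) - f' z, w⟫ ≤ ‖f' (z + t • w) - f' z‖ * ‖w‖ := real_inner_le_norm _ _
      _ ≤ L * (t * ‖w‖) * ‖w‖ := by gcongr
      _ = L * ‖w‖ ^ 2 * t := by ring
  have hanti : AntitoneOn r (Set.Ici 0) :=
    antitoneOn_of_hasDerivWithinAt_nonpos (convex_Ici 0)
      (fun t _ => (hr t).continuousAt.continuousWithinAt) (fun t _ => (hr t).hasDerivWithinAt)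
      hr_nonpos
  have h01 := hanti Set.self_mem_Ici (Set.mem_Ici.2 zero_le_one) zero_le_one
  simp only [r, zero_smul, one_smul, add_zero] at h01
  linarith

theorem armijo_of_lipschitzWith_gradient (hf : ∀ z, HasGradientAt f (f' z) z)
    (hlip : LipschitzWith L f') {z v : E} {α t : ℝ} (ht : 0 ≤ t)
    (hstep : L * t * ‖v‖ ^ 2 ≤ 2 * (1 - α) * -⟪f' z, v⟫) :
    f (z + t • v) ≤ f z + α * t * ⟪f' z, v⟫ := by
  have hdesc := le_add_inner_add_sq_of_lipschitzWith_gradient hf hlip z (t • v)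
  rw [inner_smul_right, norm_smul, Real.norm_eq_abs, abs_of_nonneg ht] at hdesc
  nlinarith [mul_le_mul_of_nonneg_left hstep ht]

theorem exists_pos_eventually_armijo_decrease (hf : ∀ z, HasGradientAt f (f' z) z)
    (hlip : LipschitzWith L f') {α σ : ℝ} (hα : α ∈ Set.Ioo (0 : ℝ) 1)
    (hσ : σ ∈ Set.Ioo (0 : ℝ) 1) {v : E → E} {s : E → ℕ}
    (hs : ∀ z, IsLeast {m : ℕ | f (z + σ ^ m • v z) ≤ f z + α * σ ^ m * ⟪f' z, v z⟫} (s z))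
    {p : E} (hv : ContinuousAt v p) (hp : ⟪f' p, v p⟫ < 0) :
    ∃ δ > 0, ∀ᶠ z in 𝓝 p, f (z + σ ^ s z • v z) ≤ f z - δ := by
  set q := -⟪f' p, v p⟫ / 2 with hq_def
  set B := ‖v p‖ ^ 2 + 1 with hB_def
  have hq : 0 < q := by linarith
  obtain ⟨m, hm⟩ : ∃ m : ℕ, σ ^ m < 2 * (1 - α) * q / ((L + 1) * B) :=
    exists_pow_lt_of_lt_one (by have := hα.2; positivity) hσ.2
  rw [lt_div_iff₀ (by positivity)] at hm
  have hσm : 0 < σ ^ m := pow_pos hσ.1 m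
  have hinner : ∀ᶠ z in 𝓝 p, ⟪f' z, v z⟫ < -q :=
    (hlip.continuous.continuousAt.inner hv).eventually
      (gt_mem_nhds (show ⟪f' p, v p⟫ < -q by linarith))
  have hnorm : ∀ᶠ z in 𝓝 p, ‖v z‖ ^ 2 < B :=
    (hv.norm.pow 2).eventually (gt_mem_nhds (show ‖v p‖ ^ 2 < B by linarith))
  refine ⟨α * σ ^ m * q, by have := hα.1; positivity, ?_⟩
  filter_upwards [hinner, hnorm] with z hz hvz
  have hstep : L * σ ^ m * ‖v z‖ ^ 2 ≤ 2 * (1 - α) * -⟪f' z, v z⟫ := by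
    have hLB : (L : ℝ) * ‖v z‖ ^ 2 ≤ (L + 1) * B := by
      gcongr
      exact le_add_of_nonneg_right zero_le_one
    nlinarith [mul_le_mul_of_nonneg_left hLB hσm.le, hα.2]
  have := le_of_isLeast_armijo hα.1.le (Set.Ioo_subset_Icc_self hσ) (hs z)
    (armijo_of_lipschitzWith_gradient hf hlip hσm.le hstep) (by linarith)
  nlinarith [mul_pos hα.1 hσm]

end Armijo

section QuasiNewton

variable {ι : Type*} [Fintype ι] [DecidableEq ι]

theorem Continuous.matrix_inv {X K : Type*} [TopologicalSpace X] [Field K] [TopologicalSpace K]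
    [IsTopologicalRing K] [ContinuousInv₀ K] {A : X → Matrix ι ι K} (hA : Continuous A)
    (hdet : ∀ x, (A x).det ≠ 0) : Continuous fun x => (A x)⁻¹ :=
  continuous_iff_continuousAt.2 fun x =>
    (continuousAt_matrix_inv _
      (by rw [Ring.inverse_eq_inv']; exact continuousAt_inv₀ (hdet x))).comp hA.continuousAt

theorem Matrix.PosDef.inner_neg_inv_mulVec_nonpos {A : Matrix ι ι ℝ} (hA : A.PosDef)
    (g : EuclideanSpace ℝ ι) : ⟪g, WithLp.toLp 2 (-(A⁻¹ *ᵥ g.ofLp))⟫ ≤ 0 := by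
  have := hA.inv.posSemidef.dotProduct_mulVec_nonneg g.ofLp
  rw [EuclideanSpace.inner_eq_star_dotProduct, dotProduct_comm]
  simpa using this

theorem Matrix.PosDef.inner_neg_inv_mulVec_neg {A : Matrix ι ι ℝ} (hA : A.PosDef)
    {g : EuclideanSpace ℝ ι} (hg : g ≠ 0) : ⟪g, WithLp.toLp 2 (-(A⁻¹ *ᵥ g.ofLp))⟫ < 0 := by
  have := hA.inv.dotProduct_mulVec_pos (x := g.ofLp) (by simpa using hg)
  rw [EuclideanSpace.inner_eq_star_dotProduct, dotProduct_comm]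
  simpa using this

end QuasiNewton

section ClusterPoint

variable {X : Type*} [TopologicalSpace X] {F : X → ℝ} {x : ℕ → X} {p : X}

theorem apply_le_of_mapClusterPt_of_antitone (hanti : Antitone (F ∘ x)) (hF : ContinuousAt F p)
    (hp : MapClusterPt p atTop x) (k : ℕ) : F p ≤ F (x k) := by
  by_contra! hlt
  obtain ⟨j, hjk, hj⟩ := frequently_atTop.1
    (hp.frequently (hF.preimage_mem_nhds (Ioi_mem_nhds hlt))) k
  exact (hanti hjk).not_gt hj

theorem not_mapClusterPt_of_decrease (hanti : Antitone (F ∘ x)) (hF : ContinuousAt F p)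
    {δ : ℝ} (hδ : 0 < δ) {U : Set X} (hU : U ∈ 𝓝 p)
    (hdec : ∀ k, x k ∈ U → F (x (k + 1)) ≤ F (x k) - δ) :
    ¬MapClusterPt p atTop x := by
  intro hp
  obtain ⟨k, hkU, hk⟩ := (hp.frequently
    (inter_mem hU (hF.preimage_mem_nhds (Iio_mem_nhds (lt_add_of_pos_right (F p) hδ))))).exists
  have hk' : F (x k) < F p + δ := hk
  linarith [hdec k hkU, apply_le_of_mapClusterPt_of_antitone hanti hF hp (k + 1)]

end ClusterPoint

theorem accelerated_mm_limit_points_stationary_general {n : ℕ}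
    (f : EuclideanSpace ℝ (Fin n) → ℝ)
    (f' : EuclideanSpace ℝ (Fin n) → EuclideanSpace ℝ (Fin n))
    (hf : ∀ z, HasGradientAt f (f' z) z)
    (L : NNReal) (hlip : LipschitzWith L f')
    (H : EuclideanSpace ℝ (Fin n) → Matrix (Fin n) (Fin n) ℝ)
    (hHcont : Continuous H) (hHpd : ∀ z, (H z).PosDef)
    (α : ℝ) (hα : α ∈ Set.Ioo (0:ℝ) 1)
    (σ : ℝ) (hσ : σ ∈ Set.Ioo (0:ℝ) 1)
    (vmap : EuclideanSpace ℝ (Fin n) → EuclideanSpace ℝ (Fin n))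
    (hvmap : ∀ z, ∀ i, vmap z i = -((H z)⁻¹.mulVec (fun j => f' z j) i))
    (smap : EuclideanSpace ℝ (Fin n) → ℕ)
    (hsmap : ∀ z, IsLeast {m : ℕ |
      f (z + σ^m • vmap z) ≤ f z + α * σ^m * ⟪f' z, vmap z⟫} (smap z))
    (ψ : EuclideanSpace ℝ (Fin n) → EuclideanSpace ℝ (Fin n))
    (hψ : ∀ z, ψ z = z + σ^(smap z) • vmap z)
    (φ : EuclideanSpace ℝ (Fin n) → EuclideanSpace ℝ (Fin n))
    (hφ : ∀ z, f (φ z) ≤ f (ψ (ψ z)))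
    (x : ℕ → EuclideanSpace ℝ (Fin n))
    (hrec : ∀ k, x (k + 1) = φ (x k)) :
    ∀ p, MapClusterPt p atTop x → f' p = 0 := by
  have hv : ∀ z, vmap z = WithLp.toLp 2 (-((H z)⁻¹ *ᵥ (f' z).ofLp)) := fun z => by
    ext i
    simp [hvmap]
  have hψ_le : ∀ z, f (ψ z) ≤ f z := fun z => by
    have hdesc : ⟪f' z, vmap z⟫ ≤ 0 := hv z ▸ (hHpd z).inner_neg_inv_mulVec_nonpos (f' z)
    have harmijo : f (z + σ ^ smap z • vmap z) ≤ f z + α * σ ^ smap z * ⟪f' z, vmap z⟫ :=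
      (hsmap z).1
    rw [hψ]
    linarith [mul_nonpos_of_nonneg_of_nonpos (mul_pos hα.1 (pow_pos hσ.1 (smap z))).le hdesc]
  have hanti : Antitone (f ∘ x) := antitone_nat_of_succ_le fun k => by
    simpa [hrec] using (hφ (x k)).trans ((hψ_le _).trans (hψ_le _))
  intro p hp
  by_contra hgp
  have hvcont : Continuous vmap := by
    rw [funext hv]
    exact (PiLp.continuous_toLp 2 _).comp
      ((hHcont.matrix_inv fun z => (hHpd z).det_pos.ne').matrix_mulVec
        ((PiLp.continuous_ofLp 2 _).comp hlip.continuous)).neg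
  obtain ⟨δ, hδ, hdec⟩ := exists_pos_eventually_armijo_decrease hf hlip hα hσ hsmap
    hvcont.continuousAt (hv p ▸ (hHpd p).inner_neg_inv_mulVec_neg hgp)
  refine not_mapClusterPt_of_decrease hanti (hf p).continuousAt hδ hdec (fun k hk => ?_) hp
  calc f (x (k + 1)) ≤ f (ψ (x k)) := hrec k ▸ (hφ (x k)).trans (hψ_le _)
    _ ≤ f (x k) - δ := hψ (x k) ▸ hk

/-- If `ψ` is the Armijo-safeguarded quasi-Newton update and `φ` is any map with
`f(φ(x)) ≤ f(ψ(ψ(x)))` (the modified quasi-Newton acceleration with fallback), then every limit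
point of the iterate sequence `x_{k+1} = φ(x_k)` is a stationary point of `f`. -/
theorem accelerated_mm_limit_points_stationary {n : ℕ}
    (f : EuclideanSpace ℝ (Fin n) → ℝ)
    (f' : EuclideanSpace ℝ (Fin n) → EuclideanSpace ℝ (Fin n))
    (hf : ∀ z, HasGradientAt f (f' z) z)
    (L : NNReal) (hlip : LipschitzWith L f')
    (hcoercive : ∀ t : ℝ, IsCompact {z : EuclideanSpace ℝ (Fin n) | f z ≤ t})
    (H : EuclideanSpace ℝ (Fin n) → Matrix (Fin n) (Fin n) ℝ)
    (hHcont : Continuous H) (hHpd : ∀ z, (H z).PosDef)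
    (α : ℝ) (hα : α ∈ Set.Ioo (0:ℝ) 1)
    (σ : ℝ) (hσ : σ ∈ Set.Ioo (0:ℝ) 1)
    (vmap : EuclideanSpace ℝ (Fin n) → EuclideanSpace ℝ (Fin n))
    (hvmap : ∀ z, ∀ i, vmap z i = -((H z)⁻¹.mulVec (fun j => f' z j) i))
    (smap : EuclideanSpace ℝ (Fin n) → ℕ)
    (hsmap : ∀ z, IsLeast {m : ℕ |
      f (z + σ^m • vmap z) ≤ f z + α * σ^m * ⟪f' z, vmap z⟫} (smap z))
    (ψ : EuclideanSpace ℝ (Fin n) → EuclideanSpace ℝ (Fin n))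
    (hψ : ∀ z, ψ z = z + σ^(smap z) • vmap z)
    (φ : EuclideanSpace ℝ (Fin n) → EuclideanSpace ℝ (Fin n))
    (hφ : ∀ z, f (φ z) ≤ f (ψ (ψ z)))
    (x : ℕ → EuclideanSpace ℝ (Fin n))
    (hrec : ∀ k, x (k + 1) = φ (x k)) :
    ∀ p, MapClusterPt p atTop x → f' p = 0 :=
  accelerated_mm_limit_points_stationary_general f f' hf L hlip H hHcont hHpd α hα σ hσ vmap hvmap
    smap hsmap ψ hψ φ hφ x hrec
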